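/- Suppose all vote shares p_d are distinct, p_d ≠ 1/2 for every d, and S_F ≤ S_PR. Then for every weight w ≥ 0, every seat total S* that minimizes Φ_p(·; w) over {0,…,N} satisfies S_F ≤ S* ≤ S_PR. -/

import Mathlib

/-!
Adding the `(S+1)`-th strongest district changes `Φ` by
`1 - 2 p_(S+1) + w (|a - (S+1)| - |a - S|)`. For `S < S_F` the share `p_(S+1)` exceeds `1/2`,
and `S + 1 ≤ S_PR` forces `a ≥ S + 1/2`, so `Φ` strictly decreases on `[0, S_F]`. For
`S ≥ S_PR ≥ S_F` the share is below `1/2`, and maximality of `S_PR` gives `a ≤ S_PR + 1/2`,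
so `Φ` strictly increases on `[S_PR, N]`.
-/

open Finset

/-- Sum of the `S` largest entries of the vote-share profile `p`. -/
noncomputable def topSum {N : ℕ} (p : Fin N → ℝ) (S : ℕ) : ℝ :=
  ∑ i : Fin N, if (i : ℕ) < S then p (Tuple.sort p i.rev) else 0

/-- `ordStat p i` is the `(i+1)`-th largest entry of `p` (so `ordStat p ⟨S-1,_⟩` is `p_(S)`). -/
noncomputable def ordStat {N : ℕ} (p : Fin N → ℝ) (i : Fin N) : ℝ :=
  p (Tuple.sort p i.rev)

/-- Total misrepresentation `Φ_p(S; w) = S + a − 2·Γ_p(S) + w·|a − S|` of a top-`S`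
allocation at weight `w`, where `a = ∑ d, p d`. -/
noncomputable def PhiS {N : ℕ} (p : Fin N → ℝ) (S : ℕ) (w : ℝ) : ℝ :=
  (S : ℝ) + (∑ d, p d) - 2 * topSum p S + w * |(∑ d, p d) - (S : ℝ)|

lemma abs_sub_add_one_le_abs_sub {a s : ℝ} (h : s + 1 / 2 ≤ a) : |a - (s + 1)| ≤ |a - s| := by
  rw [abs_of_nonneg (by linarith : 0 ≤ a - s)]
  exact abs_le.2 ⟨by linarith, by linarith⟩

lemma abs_sub_le_abs_sub_add_one {a s : ℝ} (h : a ≤ s + 1 / 2) : |a - s| ≤ |a - (s + 1)| := by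
  rw [abs_of_nonpos (by linarith : a - (s + 1) ≤ 0)]
  exact abs_le.2 ⟨by linarith, by linarith⟩

lemma add_half_le_of_abs_sub_le {a s r : ℝ} (hsr : s + 1 ≤ r) (h : |a - r| ≤ |a - s|) :
    s + 1 / 2 ≤ a := by
  rcases abs_cases (a - r) with ⟨_, _⟩ | ⟨_, _⟩ <;>
    rcases abs_cases (a - s) with ⟨_, _⟩ | ⟨_, _⟩ <;> linarith

lemma le_add_half_of_isGreatest_closest {a : ℝ} {N R : ℕ} (haN : a ≤ N)
    (hR : ∀ S ≤ N, |a - R| ≤ |a - S|)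
    (hR_max : ∀ S ≤ N, (∀ S' ≤ N, |a - S| ≤ |a - S'|) → S ≤ R) :
    a ≤ R + 1 / 2 := by
  by_contra! h
  have hRN : R + 1 ≤ N := by
    by_contra! hNR
    have : (N : ℝ) ≤ R := by exact_mod_cast Nat.le_of_lt_succ hNR
    linarith
  have hcloser : ∀ S' ≤ N, |a - ((R + 1 : ℕ) : ℝ)| ≤ |a - S'| := fun S' hS' => by
    push_cast
    exact (abs_sub_add_one_le_abs_sub h.le).trans (hR S' hS')
  exact absurd (hR_max (R + 1) hRN hcloser) (by omega)

lemma Antitone.lt_card_filter_le_iff {β : Type*} [LinearOrder β] {N : ℕ} {g : Fin N → β}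
    (hg : Antitone g) (t : β) (i : Fin N) : (i : ℕ) < #{j | t ≤ g j} ↔ t ≤ g i := by
  constructor
  · intro hi
    by_contra! hgi
    have hsub : ({j | t ≤ g j} : Finset (Fin N)) ⊆ Iio i := fun j hj => by
      simp only [mem_filter, mem_univ, true_and, mem_Iio] at hj ⊢
      by_contra! hij
      exact (hg hij).trans_lt hgi |>.not_ge hj
    have := card_le_card hsub
    rw [Fin.card_Iio] at this
    omega
  · intro hti
    have hsub : Iic i ⊆ ({j | t ≤ g j} : Finset (Fin N)) := fun j hj => by
      simp only [mem_filter, mem_univ, true_and, mem_Iic] at hj ⊢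
      exact hti.trans (hg hj)
    have := card_le_card hsub
    rw [Fin.card_Iic] at this
    omega

section OrderStatistics

variable {N : ℕ} (p : Fin N → ℝ)

lemma ordStat_antitone : Antitone (ordStat p) :=
  (Tuple.monotone_sort p).comp_antitone Fin.rev_anti

lemma card_filter_ordStat (P : ℝ → Prop) [DecidablePred P] :
    #{i | P (ordStat p i)} = #{d | P (p d)} := by
  simp only [card_filter]
  exact Equiv.sum_comp (Fin.revPerm.trans (Tuple.sort p)) fun d => if P (p d) then 1 else 0

lemma lt_card_le_iff_le_ordStat (t : ℝ) (i : Fin N) :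
    (i : ℕ) < #{d | t ≤ p d} ↔ t ≤ ordStat p i := by
  rw [← card_filter_ordStat]
  exact (ordStat_antitone p).lt_card_filter_le_iff t i

lemma ordStat_lt_iff_card_le (t : ℝ) (i : Fin N) :
    ordStat p i < t ↔ #{d | t ≤ p d} ≤ (i : ℕ) := by
  rw [← not_le, ← lt_card_le_iff_le_ordStat, not_lt]

lemma topSum_succ (S : ℕ) (hS : S < N) :
    topSum p (S + 1) = topSum p S + ordStat p ⟨S, hS⟩ := by
  have split : ∀ i : Fin N, (if (i : ℕ) < S + 1 then ordStat p i else 0) =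
      (if (i : ℕ) < S then ordStat p i else 0) + if ⟨S, hS⟩ = i then ordStat p i else 0 := by
    intro i
    split_ifs <;> simp_all [Fin.ext_iff] <;> omega
  change ∑ i : Fin N, (if (i : ℕ) < S + 1 then ordStat p i else 0) = _
  rw [sum_congr rfl fun i _ => split i, sum_add_distrib, sum_ite_eq, if_pos (mem_univ _)]
  rfl

lemma PhiS_succ (S : ℕ) (hS : S < N) (w : ℝ) :
    PhiS p (S + 1) w = PhiS p S w + (1 - 2 * ordStat p ⟨S, hS⟩)
      + w * (|(∑ d, p d) - (S + 1)| - |(∑ d, p d) - S|) := by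
  unfold PhiS
  rw [topSum_succ p S hS]
  push_cast
  ring

end OrderStatistics

section Steps

variable {N : ℕ} (p : Fin N → ℝ) {w : ℝ} {S : ℕ}

lemma PhiS_succ_lt (hw : 0 ≤ w) (hS : S < N) (hq : 1 / 2 < ordStat p ⟨S, hS⟩)
    (ha : S + 1 / 2 ≤ ∑ d, p d) : PhiS p (S + 1) w < PhiS p S w := by
  have := mul_le_mul_of_nonneg_left (abs_sub_add_one_le_abs_sub ha) hw
  rw [PhiS_succ p S hS]
  linarith

lemma PhiS_lt_succ (hw : 0 ≤ w) (hS : S < N) (hq : ordStat p ⟨S, hS⟩ < 1 / 2)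
    (ha : ∑ d, p d ≤ S + 1 / 2) : PhiS p S w < PhiS p (S + 1) w := by
  have := mul_le_mul_of_nonneg_left (abs_sub_le_abs_sub_add_one ha) hw
  rw [PhiS_succ p S hS]
  linarith

end Steps

theorem stmt7_general (N : ℕ) (p : Fin N → ℝ)
    (hp : ∀ d, 0 ≤ p d ∧ p d ≤ 1)
    (hhalf : ∀ d, p d ≠ 1 / 2)
    (SF SPR : ℕ)
    (hSF : SF = (Finset.univ.filter fun d => (1 : ℝ) / 2 ≤ p d).card)
    (hSPR1 : ∀ S ≤ N, |(∑ d, p d) - (SPR : ℝ)| ≤ |(∑ d, p d) - (S : ℝ)|)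
    (hSPR2 : ∀ S ≤ N, (∀ S' ≤ N, |(∑ d, p d) - (S : ℝ)| ≤ |(∑ d, p d) - (S' : ℝ)|) → S ≤ SPR)
    (hFPR : SF ≤ SPR)
    (w : ℝ) (hw : 0 ≤ w)
    (Sstar : ℕ) (hSstar : Sstar ≤ N)
    (hmin : ∀ S' ≤ N, PhiS p Sstar w ≤ PhiS p S' w) :
    SF ≤ Sstar ∧ Sstar ≤ SPR := by
  have haN : ∑ d, p d ≤ N := by
    simpa using sum_le_sum fun d (_ : d ∈ univ) => (hp d).2
  have hSFN : SF ≤ N := hSF ▸ (card_filter_le _ _).trans_eq (card_fin N)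
  have hdecr : StrictAntiOn (PhiS p · w) (Set.Iic SF) :=
    strictAntiOn_Iic_of_succ_lt fun S hS => by
      have hSN : S < N := by omega
      have hq : 1 / 2 ≤ ordStat p ⟨S, hSN⟩ := (lt_card_le_iff_le_ordStat p _ _).1 (hSF ▸ hS)
      refine PhiS_succ_lt p hw hSN (hq.lt_of_ne' (hhalf _)) ?_
      have hSPR : (S : ℝ) + 1 ≤ SPR := by exact_mod_cast hS.trans_le hFPR
      exact add_half_le_of_abs_sub_le hSPR (hSPR1 S hSN.le)
  have hincr : StrictMonoOn (PhiS p · w) (Set.Icc SPR N) :=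
    strictMonoOn_of_lt_succ Set.ordConnected_Icc fun S _ hS hS' => by
      rw [Order.succ_eq_add_one] at hS' ⊢
      have hSN : S < N := hS'.2
      have hq : ordStat p ⟨S, hSN⟩ < 1 / 2 :=
        (ordStat_lt_iff_card_le p _ _).2 (hSF ▸ hFPR.trans hS.1)
      refine PhiS_lt_succ p hw hSN hq ((le_add_half_of_isGreatest_closest haN hSPR1 hSPR2).trans ?_)
      gcongr
      exact_mod_cast hS.1
  constructor
  · by_contra! h
    exact (hdecr (Set.mem_Iic.2 h.le) (Set.mem_Iic.2 le_rfl) h).not_ge (hmin SF hSFN)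
  · by_contra! h
    have hSPRN : SPR ≤ N := h.le.trans hSstar
    exact (hincr ⟨le_rfl, hSPRN⟩ ⟨h.le, hSstar⟩ h).not_ge (hmin SPR hSPRN)

/-- Lemma 3: every minimizer lies between `S_F` and `S_PR`.
Suppose all vote shares are distinct, `p_d ≠ 1/2` for every `d`, and `S_F ≤ S_PR`,
where `S_F = #{d : p_d ≥ 1/2}` is the FPTP seat total and `S_PR` is the largest
minimizer of `|a − S|` over `S ∈ {0,…,N}`. Then for every weight `w ≥ 0`, every seat
total `S*` minimizing `Φ_p(·; w)` over `{0,…,N}` satisfies `S_F ≤ S* ≤ S_PR`. -/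
theorem stmt7 (N : ℕ) (hN : 3 ≤ N) (p : Fin N → ℝ)
    (hp : ∀ d, 0 ≤ p d ∧ p d ≤ 1) (hinj : Function.Injective p)
    (hhalf : ∀ d, p d ≠ 1 / 2)
    (SF SPR : ℕ)
    (hSF : SF = (Finset.univ.filter fun d => (1 : ℝ) / 2 ≤ p d).card)
    (hSPR0 : SPR ≤ N)
    (hSPR1 : ∀ S ≤ N, |(∑ d, p d) - (SPR : ℝ)| ≤ |(∑ d, p d) - (S : ℝ)|)
    (hSPR2 : ∀ S ≤ N, (∀ S' ≤ N, |(∑ d, p d) - (S : ℝ)| ≤ |(∑ d, p d) - (S' : ℝ)|) → S ≤ SPR)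
    (hFPR : SF ≤ SPR)
    (w : ℝ) (hw : 0 ≤ w)
    (Sstar : ℕ) (hSstar : Sstar ≤ N)
    (hmin : ∀ S' ≤ N, PhiS p Sstar w ≤ PhiS p S' w) :
    SF ≤ Sstar ∧ Sstar ≤ SPR :=
  stmt7_general N p hp hhalf SF SPR hSF hSPR1 hSPR2 hFPR w hw Sstar hSstar hmin
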